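/- (Component interaction.) Let k, ℓ be integers with 0 ≤ ℓ < 2k, let G = (V, E) be a (k,ℓ)-sparse multigraph, and let V₁ ≠ V₂ be two distinct components of G. If 0 ≤ ℓ ≤ k, then V₁ ∩ V₂ = ∅. If k < ℓ < 2k, then |V₁ ∩ V₂| ≤ 1. In either case the components are edge-disjoint: no edge of E has both of its endpoints in V₁ and both of its endpoints in V₂. -/
import Mathlib


/-- The number of edges of the multiset `E` (counted with multiplicity)
whose endpoints both lie in the vertex subset `S`. -/
def spanCount {V : Type*} [DecidableEq V] (E : Multiset (Sym2 V)) (S : Finset V) : ℕ :=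
  (E.filter (fun e => e ∈ S.sym2)).card

/-- A multigraph on the finite vertex type `V` with edge multiset `E` is
`(k,ℓ)`-sparse if every subset `S` of vertices spans at most `max 0 (k|S| - ℓ)` edges. -/
def Sparse {V : Type*} [Fintype V] [DecidableEq V] (k l : ℤ) (E : Multiset (Sym2 V)) : Prop :=
  ∀ S : Finset V, (spanCount E S : ℤ) ≤ max 0 (k * S.card - l)

/-- A multigraph is `(k,ℓ)`-tight if it is `(k,ℓ)`-sparse and has exactly `k|V| - ℓ` edges. -/
def Tight {V : Type*} [Fintype V] [DecidableEq V] (k l : ℤ) (E : Multiset (Sym2 V)) : Prop :=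
  Sparse k l E ∧ (Multiset.card E : ℤ) = k * (Fintype.card V) - l

/-- A block of a `(k,ℓ)`-sparse multigraph is a vertex subset spanning exactly
`k|S| - ℓ` edges. -/
def IsBlock {V : Type*} [DecidableEq V] (k l : ℤ) (E : Multiset (Sym2 V))
    (S : Finset V) : Prop :=
  (spanCount E S : ℤ) = k * S.card - l

/-- A component is a block that is maximal under inclusion of vertex sets. -/
def IsComponent {V : Type*} [DecidableEq V] (k l : ℤ) (E : Multiset (Sym2 V))
    (S : Finset V) : Prop :=
  IsBlock k l E S ∧ ∀ T : Finset V, IsBlock k l E T → S ⊆ T → S = T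

/-- Supermodularity of the span count. -/
lemma spanCount_supermod {V : Type*} [DecidableEq V] (E : Multiset (Sym2 V)) (A B : Finset V) :
    spanCount E A + spanCount E B ≤ spanCount E (A ∪ B) + spanCount E (A ∩ B) := by
  unfold spanCount
  rw [← Multiset.card_add, ← Multiset.card_add, Multiset.filter_add_filter]
  refine Multiset.card_le_card (add_le_add ?_ ?_)
  · apply Multiset.monotone_filter_right
    intro e he
    simp only [Finset.mem_sym2_iff] at *
    intro a ha
    rcases he with h | h
    · exact Finset.mem_union_left _ (h a ha)
    · exact Finset.mem_union_right _ (h a ha)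
  · apply Multiset.monotone_filter_right
    intro e he
    simp only [Finset.mem_sym2_iff] at *
    intro a ha
    exact Finset.mem_inter.mpr ⟨he.1 a ha, he.2 a ha⟩

/-- If the intersection of two distinct components could be "large"
(`k·|V₁∩V₂| ≥ ℓ`), the union would be a block, contradicting maximality. -/
lemma key_lemma (k l : ℤ) (hl0 : 0 ≤ l) (hl2 : l < 2 * k)
    {V : Type*} [Fintype V] [DecidableEq V]
    (E : Multiset (Sym2 V)) (hS : Sparse k l E)
    (V₁ V₂ : Finset V) (hC1 : IsComponent k l E V₁) (hC2 : IsComponent k l E V₂)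
    (hne : V₁ ≠ V₂) :
    ¬ (0 ≤ k * ((V₁ ∩ V₂).card : ℤ) - l) := by
  intro hI
  have hk : (0:ℤ) < k := by linarith
  have hA := hC1.1
  have hB := hC2.1
  unfold IsBlock at hA hB
  -- k|V₁| - l ≥ 0
  have hA0 : (0:ℤ) ≤ k * V₁.card - l := by rw [← hA]; positivity
  have hcardU : V₁.card ≤ (V₁ ∪ V₂).card :=
    Finset.card_le_card Finset.subset_union_left
  have hU0 : (0:ℤ) ≤ k * ((V₁ ∪ V₂).card : ℤ) - l := by
    have : (V₁.card : ℤ) ≤ ((V₁ ∪ V₂).card : ℤ) := by exact_mod_cast hcardU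
    nlinarith
  have hsupU := hS (V₁ ∪ V₂)
  have hsupI := hS (V₁ ∩ V₂)
  rw [max_eq_right hU0] at hsupU
  rw [max_eq_right hI] at hsupI
  have hsuper := spanCount_supermod E V₁ V₂
  have hsuper' : (spanCount E V₁ : ℤ) + spanCount E V₂ ≤
      (spanCount E (V₁ ∪ V₂) : ℤ) + spanCount E (V₁ ∩ V₂) := by exact_mod_cast hsuper
  have hcards : ((V₁ ∪ V₂).card : ℤ) + ((V₁ ∩ V₂).card : ℤ) = (V₁.card : ℤ) + V₂.card := by
    exact_mod_cast Finset.card_union_add_card_inter V₁ V₂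
  -- union is a block
  have hUblock : IsBlock k l E (V₁ ∪ V₂) := by
    unfold IsBlock
    nlinarith [hsuper', hsupU, hsupI, hA, hB, hcards]
  have h1 : V₁ = V₁ ∪ V₂ := hC1.2 _ hUblock Finset.subset_union_left
  have h2 : V₂ = V₁ ∪ V₂ := hC2.2 _ hUblock Finset.subset_union_right
  exact hne (h1.trans h2.symm)

/-- Component interaction: two distinct components of a `(k,ℓ)`-sparse multigraph are
vertex-disjoint in the lower range `ℓ ≤ k`, overlap in at most one vertex in the upper
range `k < ℓ < 2k`, and are always edge-disjoint. -/
theorem stmt10 (k l : ℤ) (hl0 : 0 ≤ l) (hl2 : l < 2 * k)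
    {V : Type*} [Fintype V] [DecidableEq V]
    (E : Multiset (Sym2 V)) (hS : Sparse k l E)
    (V₁ V₂ : Finset V) (hC1 : IsComponent k l E V₁) (hC2 : IsComponent k l E V₂)
    (hne : V₁ ≠ V₂) :
    (l ≤ k → V₁ ∩ V₂ = ∅) ∧
    (k < l → (V₁ ∩ V₂).card ≤ 1) ∧
    (∀ e ∈ E, ¬(e ∈ V₁.sym2 ∧ e ∈ V₂.sym2)) := by
  have key := key_lemma k l hl0 hl2 E hS V₁ V₂ hC1 hC2 hne
  have hk : (0:ℤ) < k := by linarith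
  refine ⟨?_, ?_, ?_⟩
  · intro hlk
    by_contra h
    have hpos : 0 < (V₁ ∩ V₂).card := Finset.card_pos.mpr (Finset.nonempty_iff_ne_empty.mpr h)
    have : (1:ℤ) ≤ ((V₁ ∩ V₂).card : ℤ) := by exact_mod_cast hpos
    exact key (by nlinarith)
  · intro hkl
    by_contra h
    have h2 : (2:ℤ) ≤ ((V₁ ∩ V₂).card : ℤ) := by omega
    exact key (by nlinarith)
  · intro e he ⟨h1, h2⟩
    have heI : e ∈ (V₁ ∩ V₂).sym2 := by
      simp only [Finset.mem_sym2_iff] at *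
      exact fun a ha => Finset.mem_inter.mpr ⟨h1 a ha, h2 a ha⟩
    have hmem : e ∈ E.filter (fun e => e ∈ (V₁ ∩ V₂).sym2) :=
      Multiset.mem_filter.mpr ⟨he, heI⟩
    have hpos : 0 < spanCount E (V₁ ∩ V₂) :=
      Multiset.card_pos_iff_exists_mem.mpr ⟨e, hmem⟩
    have hsp := hS (V₁ ∩ V₂)
    have : (1:ℤ) ≤ max 0 (k * ((V₁ ∩ V₂).card : ℤ) - l) := by
      have : (1:ℤ) ≤ (spanCount E (V₁ ∩ V₂) : ℤ) := by exact_mod_cast hpos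
      linarith
    exact key (by rcases le_or_gt 0 (k * ((V₁ ∩ V₂).card : ℤ) - l) with h | h
                  · exact h
                  · rw [max_eq_left h.le] at this; linarith)
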